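/- If f(z) = z + a₂z² + a₃z³ + ⋯ is starlike of order α with 3/4 ≤ α ≤ 1, then |a₂a₄ - a₃²| ≤ (1 - α)²[13 - 16(1 - α)²]/12. -/

import Mathlib

/-!
A starlike function of order `α` has a Schwarz function `ω = z g`, `‖g‖ ≤ 1` on the disc, with
`z f' / f = (1 + (1 - 2α) ω) / (1 - ω)`. Comparing Taylor coefficients expresses `a₂, a₃, a₄`
through the coefficients `w₀, w₁, w₂` of `g`, and
`a₂ a₄ - a₃² = (1 - α)² (4 w₀ w₂ + 2 w₀² w₁ - 3 w₁² + (1 - 4 (1 - α)²) w₀⁴) / 3`.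
One step of the Schur algorithm gives `‖w₁‖ ≤ 1 - ‖w₀‖²` and
`‖(1 - ‖w₀‖²) w₂ + conj w₀ w₁²‖ ≤ (1 - ‖w₀‖²)² - ‖w₁‖²`, and under these constraints the
triangle-inequality bound is a polynomial inequality in `‖w₀‖, ‖w₁‖, ‖w₂‖` valid for
`(1 - α)² ≤ 1 / 16`.
-/

open Filter Topology Finset Metric Set ComplexConjugate
open scoped Nat

section TaylorCoeff

variable {𝕜 : Type*} [NontriviallyNormedField 𝕜] {f g : 𝕜 → 𝕜}

noncomputable def taylorCoeff (f : 𝕜 → 𝕜) (n : ℕ) : 𝕜 := iteratedDeriv n f 0 / n !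

@[simp] lemma taylorCoeff_zero (f : 𝕜 → 𝕜) : taylorCoeff f 0 = f 0 := by
  simp [taylorCoeff]

lemma taylorCoeff_one (f : 𝕜 → 𝕜) : taylorCoeff f 1 = deriv f 0 := by
  simp [taylorCoeff]

lemma taylorCoeff_deriv [CharZero 𝕜] (f : 𝕜 → 𝕜) (n : ℕ) :
    taylorCoeff (deriv f) n = (n + 1) * taylorCoeff f (n + 1) := by
  simp only [taylorCoeff, iteratedDeriv_succ', Nat.factorial_succ, Nat.cast_mul, Nat.cast_succ]
  field_simp

lemma Filter.EventuallyEq.taylorCoeff_eq (h : f =ᶠ[𝓝 0] g) (n : ℕ) :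
    taylorCoeff f n = taylorCoeff g n := by
  simp only [taylorCoeff, h.iteratedDeriv_eq]

lemma taylorCoeff_const (c : 𝕜) (n : ℕ) :
    taylorCoeff (fun _ => c) n = if n = 0 then c else 0 := by
  rcases n with _ | n <;> simp [taylorCoeff, iteratedDeriv_const]

lemma taylorCoeff_const_mul (c : 𝕜) (f : 𝕜 → 𝕜) (n : ℕ) :
    taylorCoeff (fun z => c * f z) n = c * taylorCoeff f n := by
  simp [taylorCoeff, mul_div_assoc]

lemma taylorCoeff_add {n : ℕ} (hf : ContDiffAt 𝕜 n f 0) (hg : ContDiffAt 𝕜 n g 0) :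
    taylorCoeff (fun z => f z + g z) n = taylorCoeff f n + taylorCoeff g n := by
  simp [taylorCoeff, iteratedDeriv_fun_add hf hg, add_div]

lemma taylorCoeff_mul [CharZero 𝕜] {n : ℕ} (hf : ContDiffAt 𝕜 n f 0) (hg : ContDiffAt 𝕜 n g 0) :
    taylorCoeff (fun z => f z * g z) n =
      ∑ p ∈ antidiagonal n, taylorCoeff f p.1 * taylorCoeff g p.2 := by
  simp only [taylorCoeff, iteratedDeriv_fun_mul hf hg, sum_div]
  rw [Nat.sum_antidiagonal_eq_sum_range_succ (fun i j => iteratedDeriv i f 0 / i ! *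
    (iteratedDeriv j g 0 / j !))]
  refine sum_congr rfl fun i hi => ?_
  have hin : i ≤ n := Nat.lt_succ_iff.mp (mem_range.mp hi)
  have hchoose : (n.choose i : 𝕜) ≠ 0 := Nat.cast_ne_zero.mpr (Nat.choose_pos hin).ne'
  rw [← Nat.choose_mul_factorial_mul_factorial hin]
  push_cast
  field_simp

lemma taylorCoeff_const_add (c : 𝕜) (f : 𝕜 → 𝕜) {n : ℕ} (hn : n ≠ 0) :
    taylorCoeff (fun z => c + f z) n = taylorCoeff f n := by
  simp [taylorCoeff, iteratedDeriv_const_add (Nat.pos_of_ne_zero hn)]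

lemma taylorCoeff_id (n : ℕ) : taylorCoeff (fun z : 𝕜 => z) n = if n = 1 then 1 else 0 := by
  by_cases hn : n = 1 <;> simp [taylorCoeff, iteratedDeriv_fun_id_zero, hn]

lemma taylorCoeff_id_mul_succ [CharZero 𝕜] {n : ℕ} (hf : ContDiffAt 𝕜 (n + 1) f 0) :
    taylorCoeff (fun z => z * f z) (n + 1) = taylorCoeff f n := by
  rw [taylorCoeff_mul (by fun_prop) (by exact_mod_cast hf), sum_eq_single (1, n)]
  · simp [taylorCoeff_id]
  · rintro ⟨i, j⟩ hij hne
    rw [HasAntidiagonal.mem_antidiagonal] at hij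
    have : i ≠ 1 := by rintro rfl; simp_all; omega
    simp [taylorCoeff_id, this]
  · simp [HasAntidiagonal.mem_antidiagonal, add_comm]

lemma taylorCoeff_id_mul_deriv [CharZero 𝕜] {n : ℕ} (hf : ContDiffAt 𝕜 n (deriv f) 0) :
    taylorCoeff (fun z => z * deriv f z) n = n * taylorCoeff f n := by
  rcases n with _ | n
  · simp
  · rw [taylorCoeff_id_mul_succ hf, taylorCoeff_deriv]
    push_cast
    ring

lemma taylorCoeff_dslope [CharZero 𝕜] {n : ℕ} (hf : ContDiffAt 𝕜 (n + 1) (dslope f 0) 0) :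
    taylorCoeff (dslope f 0) n = taylorCoeff f (n + 1) := by
  have hexp : f = fun z => f 0 + z * dslope f 0 z := by
    funext z
    exact eq_add_of_sub_eq' (by simpa using (sub_smul_dslope f 0 z).symm)
  conv_rhs => rw [hexp]
  rw [taylorCoeff_const_add _ _ (Nat.succ_ne_zero n), taylorCoeff_id_mul_succ hf]

lemma HasFPowerSeriesAt.taylorCoeff_eq [CompleteSpace 𝕜] [CharZero 𝕜] {c : ℕ → 𝕜}
    (hf : HasFPowerSeriesAt f (FormalMultilinearSeries.ofScalars 𝕜 c) 0) (n : ℕ) :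
    taylorCoeff f n = c n := by
  have := hf.analyticAt.hasFPowerSeriesAt.eq_formalMultilinearSeries hf
  exact congrFun ((FormalMultilinearSeries.ofScalars_series_eq_iff _ _ _).mp this) n

lemma taylorCoeff_recursion [CompleteSpace 𝕜] [CharZero 𝕜] {c : 𝕜}
    (hF : AnalyticAt 𝕜 (dslope f 0) 0) (hg : AnalyticAt 𝕜 g 0)
    (heq : deriv (dslope f 0) =ᶠ[𝓝 0]
      fun z => (c * dslope f 0 z + z * deriv (dslope f 0) z) * g z) (k : ℕ) :
    (k + 1) * taylorCoeff f (k + 2) =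
      ∑ p ∈ antidiagonal k, (p.1 + c) * taylorCoeff f (p.1 + 1) * taylorCoeff g p.2 := by
  have hF' : AnalyticAt 𝕜 (deriv (dslope f 0)) 0 := hF.deriv
  have hD : AnalyticAt 𝕜 (fun z => c * dslope f 0 z + z * deriv (dslope f 0) z) 0 := by
    fun_prop
  rw [← taylorCoeff_dslope hF.contDiffAt, ← taylorCoeff_deriv, heq.taylorCoeff_eq,
    taylorCoeff_mul hD.contDiffAt hg.contDiffAt]
  refine sum_congr rfl fun p _ => ?_
  rw [taylorCoeff_add (by fun_prop : AnalyticAt 𝕜 (fun z => c * dslope f 0 z) 0).contDiffAt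
      (by fun_prop : AnalyticAt 𝕜 (fun z => z * deriv (dslope f 0) z) 0).contDiffAt,
    taylorCoeff_const_mul, taylorCoeff_id_mul_deriv hF'.contDiffAt,
    taylorCoeff_dslope hF.contDiffAt]
  ring

end TaylorCoeff

lemma hasFPowerSeriesOnBall_ofScalars_of_hasSum {𝕜 : Type*} [RCLike 𝕜] {f : 𝕜 → 𝕜} {c : ℕ → 𝕜}
    (hf : ∀ z ∈ ball (0 : 𝕜) 1, HasSum (fun n => c n * z ^ n) (f z)) :
    HasFPowerSeriesOnBall f (FormalMultilinearSeries.ofScalars 𝕜 c) 0 1 where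
  r_le := by
    refine ENNReal.le_of_forall_nnreal_lt fun r hr => ?_
    have hr1 : ((r : ℝ) : 𝕜) ∈ ball (0 : 𝕜) 1 := by
      simpa using (show (r : ℝ) < 1 by exact_mod_cast hr)
    refine FormalMultilinearSeries.le_radius_of_tendsto _ (l := 0) ?_
    simpa [FormalMultilinearSeries.ofScalars_norm] using
      ((hf _ hr1).summable.tendsto_atTop_zero).norm
  r_pos := one_pos
  hasSum hy := by
    rw [← ENNReal.coe_one, Metric.eball_coe, NNReal.coe_one] at hy
    simpa [FormalMultilinearSeries.ofScalars_apply_eq, mul_comm] using hf _ hy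

section Schur

variable {g : ℂ → ℂ}

lemma norm_dslope_le_one (hd : DifferentiableOn ℂ g (ball 0 1)) (h0 : g 0 = 0)
    (hb : ∀ z ∈ ball (0 : ℂ) 1, ‖g z‖ ≤ 1) {z : ℂ} (hz : z ∈ ball (0 : ℂ) 1) :
    ‖dslope g 0 z‖ ≤ 1 := by
  have hmaps : MapsTo g (ball 0 1) (closedBall (g 0) 1) := fun w hw => by
    simpa [h0] using hb w hw
  simpa using Complex.norm_dslope_le_div_of_mapsTo_ball hd hmaps hz

lemma norm_le_one_of_norm_mul_le_one (hd : DifferentiableOn ℂ g (ball 0 1))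
    (hb : ∀ z ∈ ball (0 : ℂ) 1, ‖z * g z‖ ≤ 1) {z : ℂ} (hz : z ∈ ball (0 : ℂ) 1) :
    ‖g z‖ ≤ 1 := by
  have hω : DifferentiableOn ℂ (fun w => w * g w) (ball 0 1) := differentiableOn_id.mul hd
  have hslope : dslope (fun w => w * g w) 0 z = g z := by
    rcases eq_or_ne z 0 with rfl | hz0
    · rw [dslope_same]
      have hg0 := (hd 0 hz).differentiableAt (ball_mem_nhds 0 one_pos)
      simpa using ((hasDerivAt_id' (0 : ℂ)).fun_mul hg0.hasDerivAt).deriv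
    · simpa using dslope_sub_smul_of_ne g hz0
  rw [← hslope]
  exact norm_dslope_le_one hω (by simp) hb hz

lemma one_sub_conj_mul_ne_zero {a u : ℂ} (ha : ‖a‖ < 1) (hu : ‖u‖ ≤ 1) :
    1 - conj a * u ≠ 0 := by
  refine sub_ne_zero.mpr fun h => ?_
  have : ‖conj a * u‖ < 1 := by
    rw [norm_mul, Complex.norm_conj]
    nlinarith [norm_nonneg a, norm_nonneg u]
  rw [← h, norm_one] at this
  exact this.false

lemma norm_moebius_le_one {a u : ℂ} (ha : ‖a‖ < 1) (hu : ‖u‖ ≤ 1) :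
    ‖(u - a) / (1 - conj a * u)‖ ≤ 1 := by
  rw [norm_div, div_le_one (norm_pos_iff.mpr (one_sub_conj_mul_ne_zero ha hu)),
    ← sq_le_sq₀ (norm_nonneg _) (norm_nonneg _), ← Complex.normSq_eq_norm_sq,
    ← Complex.normSq_eq_norm_sq]
  have hkey : Complex.normSq (1 - conj a * u) - Complex.normSq (u - a)
      = (1 - Complex.normSq a) * (1 - Complex.normSq u) := by
    simp only [Complex.normSq_apply, Complex.sub_re, Complex.sub_im, Complex.mul_re,
      Complex.mul_im, Complex.conj_re, Complex.conj_im, Complex.one_re, Complex.one_im]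
    ring
  have hna : Complex.normSq a < 1 := by
    rw [Complex.normSq_eq_norm_sq]; nlinarith [norm_nonneg a]
  have hnu : Complex.normSq u ≤ 1 := by
    rw [Complex.normSq_eq_norm_sq]; nlinarith [norm_nonneg u]
  nlinarith

-- `h` is the next Schur iterate: `z h = (g - g 0) / (1 - conj (g 0) g)`.
lemma exists_schur_transform (hd : DifferentiableOn ℂ g (ball 0 1))
    (hb : ∀ z ∈ ball (0 : ℂ) 1, ‖g z‖ ≤ 1) (h0 : ‖g 0‖ < 1) :
    ∃ h : ℂ → ℂ, DifferentiableOn ℂ h (ball 0 1) ∧ (∀ z ∈ ball (0 : ℂ) 1, ‖h z‖ ≤ 1) ∧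
      ∀ z ∈ ball (0 : ℂ) 1, z * h z = -g 0 + (g z + conj (g 0) * (z * (h z * g z))) := by
  set b : ℂ → ℂ := fun z => (g z - g 0) / (1 - conj (g 0) * g z)
  have hden : ∀ z ∈ ball (0 : ℂ) 1, 1 - conj (g 0) * g z ≠ 0 :=
    fun z hz => one_sub_conj_mul_ne_zero h0 (hb z hz)
  have hbd : DifferentiableOn ℂ b (ball 0 1) :=
    (hd.sub_const _).div ((hd.const_mul _).const_sub _) hden
  have hb0 : b 0 = 0 := by simp [b]
  refine ⟨dslope b 0, (Complex.differentiableOn_dslope (ball_mem_nhds 0 one_pos)).mpr hbd,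
    fun z hz => norm_dslope_le_one hbd hb0 (fun w hw => norm_moebius_le_one h0 (hb w hw)) hz,
    fun z hz => ?_⟩
  have hbz : z * dslope b 0 z = b z := by simpa [hb0] using sub_smul_dslope b 0 z
  have hbeq : b z * (1 - conj (g 0) * g z) = g z - g 0 := div_mul_cancel₀ _ (hden z hz)
  linear_combination hbeq + (1 - conj (g 0) * g z) * hbz

lemma taylorCoeff_of_schur_transform {h : ℂ → ℂ} (hg : AnalyticAt ℂ g 0) (hh : AnalyticAt ℂ h 0)
    (heq : ∀ z ∈ ball (0 : ℂ) 1, z * h z = -g 0 + (g z + conj (g 0) * (z * (h z * g z))))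
    (n : ℕ) :
    taylorCoeff h n = taylorCoeff g (n + 1) +
      conj (g 0) * ∑ p ∈ antidiagonal n, taylorCoeff h p.1 * taylorCoeff g p.2 := by
  have hev : (fun z => z * h z) =ᶠ[𝓝 0] fun z => -g 0 + (g z + conj (g 0) * (z * (h z * g z))) :=
    eventually_of_mem (ball_mem_nhds 0 one_pos) heq
  have hhg : AnalyticAt ℂ (fun z => h z * g z) 0 := hh.mul hg
  rw [← taylorCoeff_id_mul_succ hh.contDiffAt, hev.taylorCoeff_eq,
    taylorCoeff_const_add _ _ (Nat.succ_ne_zero n),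
    taylorCoeff_add hg.contDiffAt
      (by fun_prop : AnalyticAt ℂ (fun z => conj (g 0) * (z * (h z * g z))) 0).contDiffAt,
    taylorCoeff_const_mul, taylorCoeff_id_mul_succ hhg.contDiffAt,
    taylorCoeff_mul hh.contDiffAt hg.contDiffAt]

lemma taylorCoeff_eq_zero_of_norm_eq_one (hd : DifferentiableOn ℂ g (ball 0 1))
    (hb : ∀ z ∈ ball (0 : ℂ) 1, ‖g z‖ ≤ 1) (h1 : ‖g 0‖ = 1) {n : ℕ} (hn : n ≠ 0) :
    taylorCoeff g n = 0 := by
  have hconst : EqOn g (fun _ => g 0) (ball 0 1) :=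
    Complex.eqOn_of_isPreconnected_of_isMaxOn_norm (convex_ball 0 1).isPreconnected
      isOpen_ball hd (mem_ball_self one_pos) fun z hz => by simpa [h1] using hb z hz
  rw [(hconst.eventuallyEq_of_mem (ball_mem_nhds 0 one_pos)).taylorCoeff_eq, taylorCoeff_const,
    if_neg hn]

lemma exists_schur_transform_taylorCoeff (hd : DifferentiableOn ℂ g (ball 0 1))
    (hb : ∀ z ∈ ball (0 : ℂ) 1, ‖g z‖ ≤ 1) (h0 : ‖g 0‖ < 1) :
    ∃ h : ℂ → ℂ, DifferentiableOn ℂ h (ball 0 1) ∧ (∀ z ∈ ball (0 : ℂ) 1, ‖h z‖ ≤ 1) ∧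
      ((1 - ‖g 0‖ ^ 2 : ℝ) : ℂ) * h 0 = taylorCoeff g 1 ∧
      ((1 - ‖g 0‖ ^ 2 : ℝ) : ℂ) * taylorCoeff h 1 =
        taylorCoeff g 2 + conj (g 0) * h 0 * taylorCoeff g 1 := by
  obtain ⟨h, hhd, hhb, heq⟩ := exists_schur_transform hd hb h0
  have hτ : ((1 - ‖g 0‖ ^ 2 : ℝ) : ℂ) = 1 - conj (g 0) * g 0 := by
    push_cast
    rw [Complex.conj_mul']
  have hc := taylorCoeff_of_schur_transform (hd.analyticAt (ball_mem_nhds 0 one_pos))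
    (hhd.analyticAt (ball_mem_nhds 0 one_pos)) heq
  have hc0 := hc 0
  have hc1 := hc 1
  simp only [Nat.sum_antidiagonal_succ, Nat.antidiagonal_zero, sum_singleton,
    taylorCoeff_zero] at hc0 hc1
  refine ⟨h, hhd, hhb, ?_, ?_⟩ <;> rw [hτ]
  · linear_combination hc0
  · linear_combination hc1

lemma norm_taylorCoeff_one_le (hd : DifferentiableOn ℂ g (ball 0 1))
    (hb : ∀ z ∈ ball (0 : ℂ) 1, ‖g z‖ ≤ 1) :
    ‖taylorCoeff g 1‖ ≤ 1 - ‖g 0‖ ^ 2 := by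
  rcases (hb 0 (mem_ball_self one_pos)).eq_or_lt with h1 | h1
  · simp [taylorCoeff_eq_zero_of_norm_eq_one hd hb h1 one_ne_zero, h1]
  obtain ⟨h, -, hhb, hc1, -⟩ := exists_schur_transform_taylorCoeff hd hb h1
  have hτ : 0 ≤ 1 - ‖g 0‖ ^ 2 := by nlinarith [norm_nonneg (g 0)]
  rw [← hc1, norm_mul, Complex.norm_real, Real.norm_of_nonneg hτ]
  exact mul_le_of_le_one_right hτ (hhb 0 (mem_ball_self one_pos))

lemma norm_taylorCoeff_two_add_le (hd : DifferentiableOn ℂ g (ball 0 1))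
    (hb : ∀ z ∈ ball (0 : ℂ) 1, ‖g z‖ ≤ 1) :
    ‖((1 - ‖g 0‖ ^ 2 : ℝ) : ℂ) * taylorCoeff g 2 + conj (g 0) * taylorCoeff g 1 ^ 2‖ ≤
      (1 - ‖g 0‖ ^ 2) ^ 2 - ‖taylorCoeff g 1‖ ^ 2 := by
  rcases (hb 0 (mem_ball_self one_pos)).eq_or_lt with h1 | h1
  · simp [taylorCoeff_eq_zero_of_norm_eq_one hd hb h1, h1]
  obtain ⟨h, hhd, hhb, hc1, hc2⟩ := exists_schur_transform_taylorCoeff hd hb h1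
  set τ : ℝ := 1 - ‖g 0‖ ^ 2
  have hτ : 0 ≤ τ := by nlinarith [norm_nonneg (g 0)]
  have hsq : (τ : ℂ) * taylorCoeff g 2 + conj (g 0) * taylorCoeff g 1 ^ 2 =
      (τ : ℂ) ^ 2 * taylorCoeff h 1 := by
    linear_combination (-(τ : ℂ)) * hc2 - conj (g 0) * taylorCoeff g 1 * hc1
  have hnorm1 : ‖taylorCoeff g 1‖ = τ * ‖h 0‖ := by
    rw [← hc1, norm_mul, Complex.norm_real, Real.norm_of_nonneg hτ]
  rw [hsq, norm_mul, norm_pow, Complex.norm_real, Real.norm_of_nonneg hτ, hnorm1]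
  calc τ ^ 2 * ‖taylorCoeff h 1‖ ≤ τ ^ 2 * (1 - ‖h 0‖ ^ 2) := by
        gcongr
        exact norm_taylorCoeff_one_le hhd hhb
    _ = τ ^ 2 - (τ * ‖h 0‖) ^ 2 := by ring

end Schur

section Starlike

variable {f : ℂ → ℂ} {α : ℝ}

lemma norm_le_norm_add_two_mul {q : ℂ} {β : ℝ} (hβ : 0 ≤ β) (hq : -β ≤ q.re) :
    ‖q‖ ≤ ‖q + 2 * β‖ := by
  rw [← sq_le_sq₀ (norm_nonneg _) (norm_nonneg _), ← Complex.normSq_eq_norm_sq,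
    ← Complex.normSq_eq_norm_sq]
  simp only [Complex.normSq_apply, Complex.add_re, Complex.add_im, Complex.mul_re, Complex.mul_im,
    Complex.ofReal_re, Complex.ofReal_im, Complex.re_ofNat, Complex.im_ofNat]
  nlinarith

lemma eq_mul_dslope_of_eq_zero {𝕜 : Type*} [NontriviallyNormedField 𝕜] {f : 𝕜 → 𝕜}
    (hf0 : f 0 = 0) (z : 𝕜) : f z = z * dslope f 0 z := by
  simpa [hf0] using (sub_smul_dslope f 0 z).symm

lemma dslope_ne_zero_of_starlike (hf0 : f 0 = 0) (hα0 : 0 ≤ α)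
    (hstar : ∀ z ∈ ball (0 : ℂ) 1, z ≠ 0 → α < (z * deriv f z / f z).re) {z : ℂ}
    (hz : z ∈ ball (0 : ℂ) 1) (hz0 : z ≠ 0) : dslope f 0 z ≠ 0 := fun h => by
  have := hstar z hz hz0
  rw [eq_mul_dslope_of_eq_zero hf0 z, h, mul_zero, div_zero, Complex.zero_re] at this
  linarith

lemma sub_one_lt_re_of_starlike (hd : DifferentiableOn ℂ f (ball 0 1)) (hf0 : f 0 = 0)
    (hα0 : 0 ≤ α) (hstar : ∀ z ∈ ball (0 : ℂ) 1, z ≠ 0 → α < (z * deriv f z / f z).re)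
    {z : ℂ} (hz : z ∈ ball (0 : ℂ) 1) (hz0 : z ≠ 0) :
    α - 1 < (z * deriv (dslope f 0) z / dslope f 0 z).re := by
  have hFz := dslope_ne_zero_of_starlike hf0 hα0 hstar hz hz0
  have hFd : DifferentiableAt ℂ (dslope f 0) z :=
    ((Complex.differentiableOn_dslope (ball_mem_nhds 0 one_pos)).mpr hd z hz).differentiableAt
      (isOpen_ball.mem_nhds hz)
  have hderiv : deriv f z = dslope f 0 z + z * deriv (dslope f 0) z := by
    have hfun : (fun w => w * dslope f 0 w) = f := (funext (eq_mul_dslope_of_eq_zero hf0)).symm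
    simpa [hfun] using ((hasDerivAt_id' z).fun_mul hFd.hasDerivAt).deriv
  have hq : z * deriv f z / f z = 1 + z * deriv (dslope f 0) z / dslope f 0 z := by
    rw [hderiv, eq_mul_dslope_of_eq_zero hf0 z]
    field_simp
  have := hstar z hz hz0
  rw [hq, Complex.add_re, Complex.one_re] at this
  linarith

/-- With `F = f / z`, the Schwarz function `z g(z) = (z f'/f - 1) / (z f'/f + 1 - 2α)` of a
starlike function of order `α` equals `z F' / ((2 - 2α) F + z F')`. -/
lemma exists_schwarz_function_of_starlike (hd : DifferentiableOn ℂ f (ball 0 1)) (hf0 : f 0 = 0)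
    (hf1 : deriv f 0 = 1) (hα0 : 0 ≤ α) (hα1 : α < 1)
    (hstar : ∀ z ∈ ball (0 : ℂ) 1, z ≠ 0 → α < (z * deriv f z / f z).re) :
    ∃ g : ℂ → ℂ, DifferentiableOn ℂ g (ball 0 1) ∧ (∀ z ∈ ball (0 : ℂ) 1, ‖g z‖ ≤ 1) ∧
      ∀ z ∈ ball (0 : ℂ) 1, deriv (dslope f 0) z =
        ((2 - 2 * α) * dslope f 0 z + z * deriv (dslope f 0) z) * g z := by
  set F := dslope f 0
  set D : ℂ → ℂ := fun z => (2 - 2 * α) * F z + z * deriv F z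
  have hF : DifferentiableOn ℂ F (ball 0 1) :=
    (Complex.differentiableOn_dslope (ball_mem_nhds 0 one_pos)).mpr hd
  have hF' : DifferentiableOn ℂ (deriv F) (ball 0 1) := hF.deriv isOpen_ball
  have hD : DifferentiableOn ℂ D (ball 0 1) := (hF.const_mul _).add (differentiableOn_id.mul hF')
  have hFne : ∀ z ∈ ball (0 : ℂ) 1, z ≠ 0 → F z ≠ 0 :=
    fun z hz hz0 => dslope_ne_zero_of_starlike hf0 hα0 hstar hz hz0
  have hre : ∀ z ∈ ball (0 : ℂ) 1, z ≠ 0 → α - 1 < (z * deriv F z / F z).re :=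
    fun z hz hz0 => sub_one_lt_re_of_starlike hd hf0 hα0 hstar hz hz0
  have hDq : ∀ z ∈ ball (0 : ℂ) 1, z ≠ 0 →
      D z = F z * (z * deriv F z / F z + 2 * ((1 - α : ℝ) : ℂ)) := fun z hz hz0 => by
    simp only [D]
    field_simp [hFne z hz hz0]
    push_cast
    ring
  have hDne : ∀ z ∈ ball (0 : ℂ) 1, D z ≠ 0 := by
    intro z hz
    rcases eq_or_ne z 0 with rfl | hz0
    · have hF0 : F 0 = 1 := by simp only [F, dslope_same, hf1]
      simp only [D, hF0, mul_one, zero_mul, add_zero]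
      exact_mod_cast (by linarith : (2 : ℝ) - 2 * α ≠ 0)
    · rw [hDq z hz hz0]
      refine mul_ne_zero (hFne z hz hz0) fun h => ?_
      have h' := congrArg Complex.re h
      simp only [Complex.add_re, Complex.mul_re, Complex.re_ofNat, Complex.im_ofNat,
        Complex.ofReal_re, Complex.ofReal_im, mul_zero, sub_zero, Complex.zero_re] at h'
      linarith [hre z hz hz0]
  refine ⟨fun z => deriv F z / D z, hF'.div hD hDne, fun z hz => ?_,
    fun z hz => (mul_div_cancel₀ _ (hDne z hz)).symm⟩
  refine norm_le_one_of_norm_mul_le_one (hF'.div hD hDne) (fun w hw => ?_) hz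
  rcases eq_or_ne w 0 with rfl | hw0
  · simp
  have hω : w * (deriv F w / D w) =
      w * deriv F w / F w / (w * deriv F w / F w + 2 * ((1 - α : ℝ) : ℂ)) := by
    rw [hDq w hw hw0]
    field_simp
  change ‖w * (deriv F w / D w)‖ ≤ 1
  rw [hω, norm_div]
  exact div_le_one_of_le₀ (norm_le_norm_add_two_mul (by linarith)
    (by linarith [hre w hw hw0])) (norm_nonneg _)

end Starlike

lemma hankel_polynomial_le {x y s β : ℝ} (hβ : β ^ 2 ≤ 1 / 16) (hx0 : 0 ≤ x) (hx : x < 1)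
    (hy0 : 0 ≤ y) (hy : y ≤ 1 - x ^ 2)
    (hs : (1 - x ^ 2) * s ≤ (1 - x ^ 2) ^ 2 - y ^ 2 + x * y ^ 2) :
    4 * x * s + 2 * x ^ 2 * y + 3 * y ^ 2 + (1 - 4 * β ^ 2) * x ^ 4 ≤ (13 - 16 * β ^ 2) / 4 := by
  have hτ : 0 < 1 - x ^ 2 := by nlinarith
  have hid : (1 - x ^ 2) * ((13 - 16 * β ^ 2) -
        4 * (4 * x * s + 2 * x ^ 2 * y + 3 * y ^ 2 + (1 - 4 * β ^ 2) * x ^ 4)) =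
      16 * x * ((1 - x ^ 2) ^ 2 - y ^ 2 + x * y ^ 2 - (1 - x ^ 2) * s)
        + (1 - x ^ 2) * (1 - 16 * β ^ 2 + (8 + 16 * β ^ 2) * x ^ 4)
        + ((1 - x ^ 2) - y) *
          (8 * x ^ 2 * (1 - x ^ 2) + 4 * (1 - x) * (3 - x) * (y + (1 - x ^ 2))) := by
    ring
  have h1 : 0 ≤ 16 * x * ((1 - x ^ 2) ^ 2 - y ^ 2 + x * y ^ 2 - (1 - x ^ 2) * s) :=
    mul_nonneg (by positivity) (by linarith)
  have h2 : 0 ≤ (1 - x ^ 2) * (1 - 16 * β ^ 2 + (8 + 16 * β ^ 2) * x ^ 4) :=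
    mul_nonneg hτ.le (by nlinarith [pow_nonneg hx0 4, sq_nonneg β])
  have h3 : 0 ≤ ((1 - x ^ 2) - y) *
      (8 * x ^ 2 * (1 - x ^ 2) + 4 * (1 - x) * (3 - x) * (y + (1 - x ^ 2))) := by
    apply mul_nonneg (by linarith)
    have : 0 ≤ 4 * (1 - x) * (3 - x) := by nlinarith
    positivity
  have := nonneg_of_mul_nonneg_right (hid ▸ add_nonneg (add_nonneg h1 h2) h3) hτ
  linarith

lemma norm_hankel_combination_le {w₀ w₁ w₂ : ℂ} {β : ℝ} (hβ : β ^ 2 ≤ 1 / 16) (h₀ : ‖w₀‖ ≤ 1)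
    (h₁ : ‖w₁‖ ≤ 1 - ‖w₀‖ ^ 2)
    (h₂ : ‖((1 - ‖w₀‖ ^ 2 : ℝ) : ℂ) * w₂ + conj w₀ * w₁ ^ 2‖ ≤ (1 - ‖w₀‖ ^ 2) ^ 2 - ‖w₁‖ ^ 2)
    (hdeg : ‖w₀‖ = 1 → w₂ = 0) :
    ‖4 * w₀ * w₂ + 2 * w₀ ^ 2 * w₁ - 3 * w₁ ^ 2 + ((1 - 4 * β ^ 2 : ℝ) : ℂ) * w₀ ^ 4‖ ≤
      (13 - 16 * β ^ 2) / 4 := by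
  have hcoef : 0 ≤ 1 - 4 * β ^ 2 := by nlinarith
  have htri : ‖4 * w₀ * w₂ + 2 * w₀ ^ 2 * w₁ - 3 * w₁ ^ 2 + ((1 - 4 * β ^ 2 : ℝ) : ℂ) * w₀ ^ 4‖ ≤
      4 * ‖w₀‖ * ‖w₂‖ + 2 * ‖w₀‖ ^ 2 * ‖w₁‖ + 3 * ‖w₁‖ ^ 2 + (1 - 4 * β ^ 2) * ‖w₀‖ ^ 4 := by
    refine (norm_add_le _ _).trans (add_le_add ((norm_sub_le _ _).trans
      (add_le_add ((norm_add_le _ _).trans (le_of_eq ?_)) (le_of_eq ?_))) (le_of_eq ?_))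
    · simp [norm_pow]
    · simp [norm_pow]
    · rw [norm_mul, Complex.norm_real, Real.norm_of_nonneg hcoef, norm_pow]
  refine htri.trans ?_
  rcases h₀.eq_or_lt with h | h
  · have hw₁ : ‖w₁‖ = 0 := by nlinarith [norm_nonneg w₁]
    rw [hdeg h, hw₁, h, norm_zero]
    nlinarith
  refine hankel_polynomial_le hβ (norm_nonneg _) h (norm_nonneg _) h₁ ?_
  have hτ : 0 ≤ 1 - ‖w₀‖ ^ 2 := by nlinarith [norm_nonneg w₀]
  have h₂' := norm_sub_le (((1 - ‖w₀‖ ^ 2 : ℝ) : ℂ) * w₂ + conj w₀ * w₁ ^ 2) (conj w₀ * w₁ ^ 2)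
  rw [add_sub_cancel_right, norm_mul, Complex.norm_real, Real.norm_of_nonneg hτ, norm_mul,
    Complex.norm_conj, norm_pow] at h₂'
  linarith

theorem norm_hankel_le_of_starlike {f : ℂ → ℂ} {α : ℝ} (hd : DifferentiableOn ℂ f (ball 0 1))
    (hf0 : f 0 = 0) (hf1 : deriv f 0 = 1) (hα : 3 / 4 ≤ α) (hα1 : α < 1)
    (hstar : ∀ z ∈ ball (0 : ℂ) 1, z ≠ 0 → α < (z * deriv f z / f z).re) :
    ‖taylorCoeff f 2 * taylorCoeff f 4 - taylorCoeff f 3 ^ 2‖ ≤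
      (1 - α) ^ 2 * (13 - 16 * (1 - α) ^ 2) / 12 := by
  obtain ⟨g, hgd, hgb, heq⟩ :=
    exists_schwarz_function_of_starlike hd hf0 hf1 (by linarith) hα1 hstar
  have hball : ball (0 : ℂ) 1 ∈ 𝓝 0 := ball_mem_nhds 0 one_pos
  have hrec := taylorCoeff_recursion
    ((Complex.differentiableOn_dslope hball).mpr hd |>.analyticAt hball) (hgd.analyticAt hball)
    (eventually_of_mem hball heq)
  have h1 : taylorCoeff f 1 = 1 := by rw [taylorCoeff_one, hf1]
  have r0 := hrec 0
  have r1 := hrec 1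
  have r2 := hrec 2
  simp only [Nat.sum_antidiagonal_succ, Nat.antidiagonal_zero, sum_singleton, taylorCoeff_zero,
    h1] at r0 r1 r2
  push_cast at r0 r1 r2
  have hbound := norm_hankel_combination_le (β := 1 - α) (by nlinarith)
    (hgb 0 (mem_ball_self one_pos)) (norm_taylorCoeff_one_le hgd hgb)
    (norm_taylorCoeff_two_add_le hgd hgb)
    (fun h => taylorCoeff_eq_zero_of_norm_eq_one hgd hgb h two_ne_zero)
  set w₀ := g 0
  set w₁ := taylorCoeff g 1
  set w₂ := taylorCoeff g 2
  have ha2 : taylorCoeff f 2 = (2 - 2 * α) * w₀ := by linear_combination r0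
  have ha3 : taylorCoeff f 3 = (1 - α) * w₁ + (3 - 2 * α) * (1 - α) * w₀ ^ 2 := by
    linear_combination r1 / 2 + ((3 - 2 * α) * w₀ / 2) * r0
  have ha4 : taylorCoeff f 4 = 2 / 3 * (1 - α) * w₂ + (1 - α) * (10 - 6 * α) / 3 * w₀ * w₁
      + (4 - 2 * α) * (3 - 2 * α) * (1 - α) / 3 * w₀ ^ 3 := by
    linear_combination r2 / 3 + ((3 - 2 * α) * w₁ / 3) * r0 + ((4 - 2 * α) * w₀ / 3) * ha3
  have hkey : taylorCoeff f 2 * taylorCoeff f 4 - taylorCoeff f 3 ^ 2 =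
      ((1 - α : ℝ) : ℂ) ^ 2 / 3 * (4 * w₀ * w₂ + 2 * w₀ ^ 2 * w₁ - 3 * w₁ ^ 2
        + ((1 - 4 * (1 - α) ^ 2 : ℝ) : ℂ) * w₀ ^ 4) := by
    rw [ha2, ha3, ha4]
    push_cast
    ring
  rw [hkey, norm_mul, norm_div, norm_pow, Complex.norm_real, Real.norm_eq_abs, sq_abs,
    Complex.norm_ofNat]
  calc (1 - α) ^ 2 / 3 * _ ≤ (1 - α) ^ 2 / 3 * ((13 - 16 * (1 - α) ^ 2) / 4) := by gcongr
    _ = _ := by ring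

theorem stmt_10 (f : ℂ → ℂ) (a : ℕ → ℂ)
    (hf : ∀ z ∈ Metric.ball (0 : ℂ) 1, HasSum (fun n => a n * z ^ n) (f z))
    (ha0 : a 0 = 0) (ha1 : a 1 = 1) (α : ℝ) (hα : 3 / 4 ≤ α) (hα' : α ≤ 1)
    (hstar : ∀ z ∈ Metric.ball (0 : ℂ) 1, z ≠ 0 → α < (z * deriv f z / f z).re) :
    ‖a 2 * a 4 - a 3 ^ 2‖ ≤ (1 - α) ^ 2 * (13 - 16 * (1 - α) ^ 2) / 12 := by
  have hps := hasFPowerSeriesOnBall_ofScalars_of_hasSum hf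
  have hcoeff := hps.hasFPowerSeriesAt.taylorCoeff_eq
  have hd : DifferentiableOn ℂ f (ball 0 1) := by
    simpa only [← ENNReal.coe_one, Metric.eball_coe, NNReal.coe_one] using hps.differentiableOn
  have hf0 : f 0 = 0 := by rw [← taylorCoeff_zero f, hcoeff, ha0]
  have hf1 : deriv f 0 = 1 := by rw [← taylorCoeff_one f, hcoeff, ha1]
  simp only [← hcoeff]
  rcases hα'.lt_or_eq with hlt | rfl
  · exact norm_hankel_le_of_starlike hd hf0 hf1 hα hlt hstar
  -- order `1` implies every order `α < 1`, and the bound is continuous in `α`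
  refine ge_of_tendsto (x := 𝓝[<] (1 : ℝ))
    (f := fun β : ℝ => (1 - β) ^ 2 * (13 - 16 * (1 - β) ^ 2) / 12) ?_ ?_
  · exact ((by fun_prop : Continuous fun β : ℝ => (1 - β) ^ 2 * (13 - 16 * (1 - β) ^ 2) / 12)
      |>.tendsto 1).mono_left nhdsWithin_le_nhds
  · filter_upwards [Ioo_mem_nhdsLT (by norm_num : (3 / 4 : ℝ) < 1)] with β hβ
    exact norm_hankel_le_of_starlike hd hf0 hf1 hβ.1.le hβ.2
      fun z hz hz0 => hβ.2.trans (hstar z hz hz0)
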